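/- arXiv:1709.07289 — 4 statements merged into one kernel-verified Lean document; each statement's English description precedes it below -/
import Mathlib

section
/- Let H be a real Hilbert space, J an anti-selfadjoint unitary operator on H, and H_J the internal complexification of H induced by J. A family (vₙ)_{n∈Λ} of vectors of H is an orthonormal basis of the complex Hilbert space H_J (i.e. ⟨vₙ, vₘ⟩_J = δ_{nm} and the complex linear span, taken with the J-induced scalar multiplication, is dense) if and only if the combined family consisting of all vₙ together with all J vₙ (n ∈ Λ) is an orthonormal basis of the real Hilbert space H. In particular, if H is finite-dimensional then its real dimension is even. -/
noncomputable section

universe u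

open scoped Classical

variable {H : Type*} [NormedAddCommGroup H] [InnerProductSpace ℝ H]

/-- The `J`-induced complex scalar multiplication on a real Hilbert space:
`(a + b·i) • v := a•v + b•(J v)`. -/
def csmulJ (J : H →L[ℝ] H) (c : ℂ) (v : H) : H :=
  c.re • v + c.im • J v

/-- The `J`-induced complex inner product: `⟨v, u⟩_J := ⟨v, u⟩ − i·⟨v, J u⟩`. -/
def innerJ (J : H →L[ℝ] H) (v u : H) : ℂ :=
  ((inner ℝ v u : ℝ) : ℂ) - Complex.I * ((inner ℝ v (J u) : ℝ) : ℂ)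

/-- A family `(vₙ)` is an orthonormal basis of the internal complexification `H_J` iff the
combined family of the `vₙ` and the `J vₙ` is an orthonormal basis of the real Hilbert
space `H`.  In particular, a finite-dimensional real Hilbert space admitting such a `J`
has even dimension. -/
theorem onb_of_internal_complexification [CompleteSpace H] (J : H →L[ℝ] H)
    (hJa : ContinuousLinearMap.adjoint J = -J) (hJ2 : ∀ v : H, J (J v) = -v) :
    (∀ (Λ : Type u) (v : Λ → H),
      ((∀ n m : Λ, innerJ J (v n) (v m) = if n = m then 1 else 0) ∧
        (Submodule.span ℝ
          {x : H | ∃ (c : ℂ) (n : Λ), x = csmulJ J c (v n)}).topologicalClosure = ⊤) ↔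
      (Orthonormal ℝ (Sum.elim v (fun n => J (v n))) ∧
        (Submodule.span ℝ
          (Set.range (Sum.elim v (fun n => J (v n))))).topologicalClosure = ⊤)) ∧
    (FiniteDimensional ℝ H → Even (Module.finrank ℝ H)) := by
  -- skew-symmetry of J
  have hskew : ∀ x y : H, (inner ℝ x (J y) : ℝ) = -(inner ℝ (J x) y : ℝ) := by
    intro x y
    have h := ContinuousLinearMap.adjoint_inner_left J y x
    rw [hJa] at h
    simp only [ContinuousLinearMap.neg_apply, inner_neg_left] at h
    exact h.symm
  -- unitarity of J
  have hunit : ∀ x y : H, (inner ℝ (J x) (J y) : ℝ) = inner ℝ x y := by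
    intro x y
    have h := ContinuousLinearMap.adjoint_inner_left J (J y) x
    rw [hJa] at h
    simp only [ContinuousLinearMap.neg_apply, hJ2, inner_neg_left, inner_neg_right,
      neg_inj] at h
    exact h
  constructor
  · intro Λ v
    -- span equality
    have hspan : Submodule.span ℝ {x : H | ∃ (c : ℂ) (n : Λ), x = csmulJ J c (v n)} =
        Submodule.span ℝ (Set.range (Sum.elim v (fun n => J (v n)))) := by
      apply le_antisymm
      · rw [Submodule.span_le]
        rintro x ⟨c, n, rfl⟩
        refine Submodule.add_mem _ (Submodule.smul_mem _ _ ?_) (Submodule.smul_mem _ _ ?_)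
        · exact Submodule.subset_span ⟨Sum.inl n, rfl⟩
        · exact Submodule.subset_span ⟨Sum.inr n, rfl⟩
      · rw [Submodule.span_le]
        rintro x ⟨i, rfl⟩
        cases i with
        | inl n =>
            refine Submodule.subset_span ⟨1, n, ?_⟩
            simp [csmulJ]
        | inr n =>
            refine Submodule.subset_span ⟨Complex.I, n, ?_⟩
            simp [csmulJ]
    have hauto : ∀ x : H, (inner ℝ x (J x) : ℝ) = 0 := by
      intro x
      have h := hskew x x
      have h2 : (inner ℝ (J x) x : ℝ) = inner ℝ x (J x) := real_inner_comm _ _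
      linarith [h, h2.symm]
    constructor
    · rintro ⟨hon, hdense⟩
      have hre : ∀ n m : Λ, (inner ℝ (v n) (v m) : ℝ) = if n = m then 1 else 0 := by
        intro n m
        have h := congrArg Complex.re (hon n m)
        simpa [innerJ, apply_ite Complex.re] using h
      have him : ∀ n m : Λ, (inner ℝ (v n) (J (v m)) : ℝ) = 0 := by
        intro n m
        have h := congrArg Complex.im (hon n m)
        simpa [innerJ, apply_ite Complex.im] using h
      constructor
      · rw [orthonormal_iff_ite]
        rintro (n | n) (m | m)
        · simpa using hre n m
        · simpa using him n m
        · simp only [Sum.elim_inl, Sum.elim_inr]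
          rw [real_inner_comm]
          simpa using him m n
        · have := hunit (v n) (v m)
          simp only [Sum.elim_inr, this]
          simpa using hre n m
      · rwa [hspan] at hdense
    · rintro ⟨hon, hdense⟩
      rw [orthonormal_iff_ite] at hon
      constructor
      · intro n m
        have h1 := hon (Sum.inl n) (Sum.inl m)
        have h2 := hon (Sum.inl n) (Sum.inr m)
        simp only [Sum.elim_inl, Sum.elim_inr, Sum.inl.injEq] at h1
        simp only [Sum.elim_inl, Sum.elim_inr, reduceIte] at h2
        rw [innerJ, h1, h2]
        by_cases h : n = m <;> simp [h]
      · rwa [hspan]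
  · intro hfd
    have hL : (J.toLinearMap ∘ₗ J.toLinearMap : H →ₗ[ℝ] H) =
        (-1 : ℝ) • LinearMap.id := by
      ext x
      simp [hJ2 x]
    have hdet : LinearMap.det J.toLinearMap * LinearMap.det J.toLinearMap =
        (-1 : ℝ) ^ Module.finrank ℝ H := by
      rw [← LinearMap.det_comp, hL, LinearMap.det_smul, LinearMap.det_id, mul_one]
    rcases Nat.even_or_odd (Module.finrank ℝ H) with h | h
    · exact h
    · exfalso
      rw [h.neg_one_pow] at hdet
      nlinarith [sq_nonneg (LinearMap.det J.toLinearMap)]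
end
end

section
/- Let H be a real Hilbert space and let I and J be anti-selfadjoint unitary operators on H with I ∘ J = −J ∘ I. Define the quaternion-valued form ⟨v, u⟩_Θ := ⟨v, u⟩ − ⟨v, I u⟩·i − ⟨v, J u⟩·j − ⟨v, J(I u)⟩·k on H. Then for all v, u ∈ H and a ∈ ℍ: (i) conj(⟨v, u⟩_Θ) = ⟨u, v⟩_Θ; (ii) ⟨v, L_a u⟩_Θ = ⟨v, u⟩_Θ · a and ⟨L_a v, u⟩_Θ = conj(a) · ⟨v, u⟩_Θ; and (iii) ⟨v, v⟩_Θ equals the real quaternion ‖v‖²; in particular ⟨v, v⟩_Θ = 0 if and only if v = 0. -/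
noncomputable section

variable {H : Type*} [NormedAddCommGroup H] [InnerProductSpace ℝ H]

/-- The right quaternionic action induced by anticommuting anti-selfadjoint unitaries
`I`, `J`. -/
def quatL (I J : H →L[ℝ] H) (a : Quaternion ℝ) (v : H) : H :=
  a.re • v + a.imI • I v + a.imJ • J v + a.imK • J (I v)

/-- The quaternion-valued form
`⟨v, u⟩_Θ := ⟨v, u⟩ − ⟨v, I u⟩·i − ⟨v, J u⟩·j − ⟨v, J (I u)⟩·k`. -/
def innerQuat (I J : H →L[ℝ] H) (v u : H) : Quaternion ℝ :=
  ⟨(inner ℝ v u : ℝ), -(inner ℝ v (I u) : ℝ), -(inner ℝ v (J u) : ℝ), -(inner ℝ v (J (I u)) : ℝ)⟩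

theorem innerQuat_re (I J : H →L[ℝ] H) (v u : H) : (innerQuat I J v u).re = inner ℝ v u := rfl
theorem innerQuat_imI (I J : H →L[ℝ] H) (v u : H) :
    (innerQuat I J v u).imI = -inner ℝ v (I u) := rfl
theorem innerQuat_imJ (I J : H →L[ℝ] H) (v u : H) :
    (innerQuat I J v u).imJ = -inner ℝ v (J u) := rfl
theorem innerQuat_imK (I J : H →L[ℝ] H) (v u : H) :
    (innerQuat I J v u).imK = -inner ℝ v (J (I u)) := rfl

open ContinuousLinearMap in
/-- The `Θ`-form is a quaternionic inner product: it is conjugate-symmetric, right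
`ℍ`-linear in the second argument (conjugate-linear in the first), and
`⟨v, v⟩_Θ = ‖v‖²`; in particular it is definite. -/
theorem quaternionic_inner_product [CompleteSpace H] (I J : H →L[ℝ] H)
    (hIa : adjoint I = -I) (hJa : adjoint J = -J)
    (hI2 : ∀ v : H, I (I v) = -v) (hJ2 : ∀ v : H, J (J v) = -v)
    (hIJ : ∀ v : H, I (J v) = -J (I v)) :
    (∀ v u : H, star (innerQuat I J v u) = innerQuat I J u v) ∧
    (∀ (a : Quaternion ℝ) (v u : H),
      innerQuat I J v (quatL I J a u) = innerQuat I J v u * a) ∧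
    (∀ (a : Quaternion ℝ) (v u : H),
      innerQuat I J (quatL I J a v) u = star a * innerQuat I J v u) ∧
    (∀ v : H, innerQuat I J v v = ((‖v‖ ^ 2 : ℝ) : Quaternion ℝ)) ∧
    (∀ v : H, innerQuat I J v v = 0 ↔ v = 0) := by
  have hI' : ∀ v u : H, (inner ℝ v (I u) : ℝ) = -(inner ℝ (I v) u : ℝ) := by
    intro v u
    have h := ContinuousLinearMap.adjoint_inner_right I v u
    rw [hIa] at h
    simp only [ContinuousLinearMap.neg_apply, inner_neg_right] at h
    linarith
  have hJ' : ∀ v u : H, (inner ℝ v (J u) : ℝ) = -(inner ℝ (J v) u : ℝ) := by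
    intro v u
    have h := ContinuousLinearMap.adjoint_inner_right J v u
    rw [hJa] at h
    simp only [ContinuousLinearMap.neg_apply, inner_neg_right] at h
    linarith
  have key : ∀ v u : H, (inner ℝ v (J (I u)) : ℝ) = -(inner ℝ u (J (I v)) : ℝ) := by
    intro v u
    have k1 := hJ' v (I u)
    have k2 := real_inner_comm (J v) (I u)
    have k3 := hI' u (J v)
    have k4 : (inner ℝ u (I (J v)) : ℝ) = -(inner ℝ u (J (I v)) : ℝ) := by
      rw [hIJ v, inner_neg_right]
    linarith
  have hzero : ∀ v : H, (inner ℝ v (I v) : ℝ) = 0 ∧ (inner ℝ v (J v) : ℝ) = 0 ∧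
      (inner ℝ v (J (I v)) : ℝ) = 0 := by
    intro v
    refine ⟨?_, ?_, ?_⟩
    · have := hI' v v; have := real_inner_comm v (I v); linarith
    · have := hJ' v v; have := real_inner_comm v (J v); linarith
    · have := key v v; linarith
  refine ⟨?_, ?_, ?_, ?_, ?_⟩
  · intro v u
    ext <;>
      simp only [innerQuat_re, innerQuat_imI, innerQuat_imJ, innerQuat_imK, Quaternion.re_star, Quaternion.imI_star, Quaternion.imJ_star,
        Quaternion.imK_star, neg_neg]
    · exact real_inner_comm u v
    · rw [hI' u v, real_inner_comm]; ring
    · rw [hJ' u v, real_inner_comm]; ring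
    · rw [key v u]
  · intro a v u
    ext <;>
      simp only [innerQuat_re, innerQuat_imI, innerQuat_imJ, innerQuat_imK, quatL, inner_add_right, real_inner_smul_right, map_add, map_smul,
        map_neg, hI2, hJ2, hIJ, inner_neg_right, smul_neg, neg_neg, Quaternion.re_mul,
        Quaternion.imI_mul, Quaternion.imJ_mul, Quaternion.imK_mul] <;> ring
  · intro a v u
    ext <;>
      simp only [innerQuat_re, innerQuat_imI, innerQuat_imJ, innerQuat_imK, quatL, inner_add_left, real_inner_smul_left, map_add, map_smul,
        map_neg, hI2, hJ2, hIJ, inner_neg_left, smul_neg, neg_neg, hI', hJ', Quaternion.re_star,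
        Quaternion.imI_star, Quaternion.imJ_star, Quaternion.imK_star,
        Quaternion.re_mul, Quaternion.imI_mul, Quaternion.imJ_mul, Quaternion.imK_mul] <;> ring
  · intro v
    obtain ⟨h1, h2, h3⟩ := hzero v
    have : ((‖v‖ ^ 2 : ℝ) : Quaternion ℝ) = ⟨‖v‖ ^ 2, 0, 0, 0⟩ := rfl
    rw [this]
    ext <;> simp [innerQuat, h1, h2, h3, real_inner_self_eq_norm_sq]
  · intro v
    obtain ⟨h1, h2, h3⟩ := hzero v
    constructor
    · intro h
      have hre : (inner ℝ v v : ℝ) = 0 := congrArg QuaternionAlgebra.re h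
      exact inner_self_eq_zero.mp hre
    · rintro rfl
      ext <;> simp [innerQuat] <;> rfl
end
end

section
/- If H is a finite-dimensional real inner product space admitting two anti-selfadjoint unitary operators I and J with I ∘ J = −J ∘ I, then the real dimension of H is divisible by four. -/
open Module Submodule

lemma aux_anticommute : ∀ n : ℕ, ∀ (H : Type u) (_ : NormedAddCommGroup H),
    ∀ (_ : InnerProductSpace ℝ H) (_ : FiniteDimensional ℝ H)
    (I J : H →ₗ[ℝ] H)
    (_ : ∀ v : H, I (I v) = -v)
    (_ : ∀ v u : H, (inner ℝ (I v) (I u) : ℝ) = inner ℝ v u)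
    (_ : ∀ v : H, J (J v) = -v)
    (_ : ∀ v u : H, (inner ℝ (J v) (J u) : ℝ) = inner ℝ v u)
    (_ : ∀ v : H, I (J v) = -J (I v)),
    finrank ℝ H = n → 4 ∣ n := by
  intro n
  induction n using Nat.strong_induction_on with
  | _ n ih =>
  intro H _ _ _ I J hI2 hIiso hJ2 hJiso hIJ hrank
  rcases Nat.eq_zero_or_pos n with h0 | hpos
  · exact h0 ▸ dvd_zero 4
  have hnt : Nontrivial H := by
    rw [← Module.finrank_pos_iff (R := ℝ)]; omega
  obtain ⟨v0, hv0⟩ := exists_ne (0 : H)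
  set v : H := ‖v0‖⁻¹ • v0 with hvdef
  have hv : ‖v‖ = 1 := by
    rw [hvdef, norm_smul, norm_inv, norm_norm, inv_mul_cancel₀ (norm_ne_zero_iff.2 hv0)]
  have key : ∀ (K : H →ₗ[ℝ] H), (∀ x : H, K (K x) = -x) →
      (∀ x y : H, (inner ℝ (K x) (K y) : ℝ) = inner ℝ x y) →
      ∀ x : H, (inner ℝ x (K x) : ℝ) = 0 := by
    intro K hK2 hKiso x
    have h := hKiso x (K x)
    rw [hK2, inner_neg_right, real_inner_comm] at h
    linarith
  have hJI : J (I v) = -I (J v) := by rw [hIJ, neg_neg]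
  have hIvJv : (inner ℝ (I v) (J v) : ℝ) = 0 := by
    have h1 : (inner ℝ (I v) (J v) : ℝ) = inner ℝ (I (J v)) v := by
      calc (inner ℝ (I v) (J v) : ℝ) = inner ℝ (J (I v)) (J (J v)) := (hJiso _ _).symm
        _ = inner ℝ (-I (J v)) (-v) := by rw [hJI, hJ2]
        _ = inner ℝ (I (J v)) v := by rw [inner_neg_neg]
    have h2 : (inner ℝ (I v) (J v) : ℝ) = -inner ℝ (I (J v)) v := by
      calc (inner ℝ (I v) (J v) : ℝ) = inner ℝ (I (I v)) (I (J v)) := (hIiso _ _).symm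
        _ = inner ℝ (-v) (I (J v)) := by rw [hI2]
        _ = -inner ℝ (I (J v)) v := by rw [inner_neg_left, real_inner_comm]
    linarith
  have hvIJv : (inner ℝ v (I (J v)) : ℝ) = 0 := by
    rw [← hIiso v (I (J v)), hI2, inner_neg_right, hIvJv, neg_zero]
  have hIvIJv : (inner ℝ (I v) (I (J v)) : ℝ) = 0 := by
    rw [hIiso]; exact key J hJ2 hJiso v
  have hJvIJv : (inner ℝ (J v) (I (J v)) : ℝ) = 0 := by
    rw [hIJ, inner_neg_right, hJiso, key I hI2 hIiso v, neg_zero]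
  have hvv : (inner ℝ v v : ℝ) = 1 := by
    rw [real_inner_self_eq_norm_sq, hv]; norm_num
  set b : Fin 4 → H := ![v, I v, J v, I (J v)] with hb
  have hb0 : b 0 = v := rfl
  have hb1 : b 1 = I v := rfl
  have hb2 : b 2 = J v := rfl
  have hb3 : b 3 = I (J v) := rfl
  have hb0' : b ⟨0, by norm_num⟩ = v := rfl
  have hb1' : b ⟨1, by norm_num⟩ = I v := rfl
  have hb2' : b ⟨2, by norm_num⟩ = J v := rfl
  have hb3' : b ⟨3, by norm_num⟩ = I (J v) := rfl
  have hob : Orthonormal ℝ b := by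
    rw [orthonormal_iff_ite]
    intro i j
    fin_cases i <;> fin_cases j <;>
      simp only [hb0, hb1, hb2, hb3, hb0', hb1', hb2', hb3', Fin.mk_zero, Fin.mk_one] <;>
      norm_num [Fin.ext_iff]
    · exact Or.inl hv
    · exact key I hI2 hIiso v
    · exact key J hJ2 hJiso v
    · exact hvIJv
    · rw [real_inner_comm]; exact key I hI2 hIiso v
    · have h := real_inner_self_eq_norm_sq (I v); rw [hIiso, hvv] at h; left; nlinarith [norm_nonneg (I v)]
    · exact hIvJv
    · exact hIvIJv
    · rw [real_inner_comm]; exact key J hJ2 hJiso v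
    · rw [real_inner_comm]; exact hIvJv
    · have h := real_inner_self_eq_norm_sq (J v); rw [hJiso, hvv] at h; left; nlinarith [norm_nonneg (J v)]
    · exact hJvIJv
    · rw [real_inner_comm]; exact hvIJv
    · rw [real_inner_comm]; exact hIvIJv
    · rw [real_inner_comm]; exact hJvIJv
    · have h := real_inner_self_eq_norm_sq (I (J v)); rw [hIiso, hJiso, hvv] at h; left; nlinarith [norm_nonneg (I (J v))]
  set W : Submodule ℝ H := span ℝ (Set.range b) with hW
  have hWrank : finrank ℝ W = 4 := by
    rw [hW, finrank_span_eq_card hob.linearIndependent, Fintype.card_fin]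
  have hgen : ∀ i, b i ∈ W := fun i => subset_span (Set.mem_range_self i)
  have hinv : ∀ (K : H →ₗ[ℝ] H), (∀ x : H, K (K x) = -x) →
      (∀ x y : H, (inner ℝ (K x) (K y) : ℝ) = inner ℝ x y) →
      (∀ i, ∃ j, K (b i) = b j ∨ K (b i) = -b j) →
      ∀ w ∈ Wᗮ, K w ∈ Wᗮ := by
    intro K hK2 hKiso hKb w hw
    rw [mem_orthogonal]
    intro u hu
    induction hu using span_induction with
    | mem x hx =>
        obtain ⟨i, rfl⟩ := hx
        have h : (inner ℝ (b i) (K w) : ℝ) = -inner ℝ (K (b i)) w := by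
          rw [← hKiso (b i) (K w), hK2, inner_neg_right]
        rw [h]
        obtain ⟨j, hj | hj⟩ := hKb i <;> rw [hj]
        · rw [inner_right_of_mem_orthogonal (hgen j) hw, neg_zero]
        · rw [inner_neg_left, inner_right_of_mem_orthogonal (hgen j) hw, neg_zero, neg_zero]
    | zero => rw [inner_zero_left]
    | add x y hx hy ihx ihy => rw [inner_add_left, ihx, ihy, add_zero]
    | smul a x hx ihx => rw [inner_smul_left, ihx, mul_zero]
  have hKbI : ∀ i, ∃ j, I (b i) = b j ∨ I (b i) = -b j := by
    intro i
    fin_cases i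
    · exact ⟨1, Or.inl rfl⟩
    · exact ⟨0, Or.inr (by show I (I v) = -v; exact hI2 v)⟩
    · exact ⟨3, Or.inl rfl⟩
    · exact ⟨2, Or.inr (by show I (I (J v)) = -(J v); exact hI2 (J v))⟩
  have hKbJ : ∀ i, ∃ j, J (b i) = b j ∨ J (b i) = -b j := by
    intro i
    fin_cases i
    · exact ⟨2, Or.inl rfl⟩
    · exact ⟨3, Or.inr (by show J (I v) = -(I (J v)); exact hJI)⟩
    · exact ⟨0, Or.inr (by show J (J v) = -v; exact hJ2 v)⟩
    · refine ⟨1, Or.inl ?_⟩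
      show J (I (J v)) = I v
      have h : J (I (J v)) = -I (J (J v)) := by rw [hIJ (J v), neg_neg]
      rw [h, hJ2, map_neg, neg_neg]
  have hIinv := hinv I hI2 hIiso hKbI
  have hJinv := hinv J hJ2 hJiso hKbJ
  set I' : Wᗮ →ₗ[ℝ] Wᗮ := (I.domRestrict Wᗮ).codRestrict Wᗮ (fun x => hIinv x x.2) with hI'
  set J' : Wᗮ →ₗ[ℝ] Wᗮ := (J.domRestrict Wᗮ).codRestrict Wᗮ (fun x => hJinv x x.2) with hJ'
  have hcI : ∀ x : Wᗮ, (I' x : H) = I x := fun x => rfl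
  have hcJ : ∀ x : Wᗮ, (J' x : H) = J x := fun x => rfl
  have hsum := W.finrank_add_finrank_orthogonal
  rw [hWrank, hrank] at hsum
  have hm : 4 ∣ finrank ℝ Wᗮ := by
    refine ih (finrank ℝ Wᗮ) (by omega) Wᗮ inferInstance inferInstance inferInstance I' J'
      ?_ ?_ ?_ ?_ ?_ rfl
    · intro x; apply Subtype.ext; rw [hcI, hcI, hI2]; rfl
    · intro x y; rw [Submodule.coe_inner, Submodule.coe_inner, hcI, hcI, hIiso]
    · intro x; apply Subtype.ext; rw [hcJ, hcJ, hJ2]; rfl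
    · intro x y; rw [Submodule.coe_inner, Submodule.coe_inner, hcJ, hcJ, hJiso]
    · intro x; apply Subtype.ext; rw [hcI, hcJ, hIJ]; rfl
  omega

/-- A finite-dimensional real inner product space admitting two anticommuting
anti-selfadjoint unitary operators `I`, `J` has real dimension divisible by four. -/
theorem finrank_dvd_four_of_anticommuting_complex_structures
    {H : Type*} [NormedAddCommGroup H] [InnerProductSpace ℝ H] [FiniteDimensional ℝ H]
    (I J : H →ₗ[ℝ] H)
    (hI2 : ∀ v : H, I (I v) = -v)
    (hIiso : ∀ v u : H, (inner ℝ (I v) (I u) : ℝ) = inner ℝ v u)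
    (hJ2 : ∀ v : H, J (J v) = -v)
    (hJiso : ∀ v u : H, (inner ℝ (J v) (J u) : ℝ) = inner ℝ v u)
    (hIJ : ∀ v : H, I (J v) = -J (I v)) :
    4 ∣ Module.finrank ℝ H := by
  exact aux_anticommute _ H inferInstance inferInstance inferInstance I J hI2 hIiso hJ2 hJiso hIJ rfl
end

section
/- Let H be a complex Hilbert space and R a von Neumann algebra on H, i.e. a unital star-subalgebra of the algebra of continuous linear operators on H that equals its own double commutant. Let P be the set of orthogonal projections belonging to R, i.e. the operators p ∈ R with p ∘ p = p and p* = p. Then the double commutant of P (within the continuous linear operators on H) equals R. -/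
noncomputable section

variable {H : Type*} [NormedAddCommGroup H] [InnerProductSpace ℂ H] [CompleteSpace H]

/-- The commutant of a set of continuous linear operators. -/
def commutant (S : Set (H →L[ℂ] H)) : Set (H →L[ℂ] H) :=
  {T : H →L[ℂ] H | ∀ A ∈ S, A * T = T * A}

namespace VNAux

open ContinuousLinearMap

lemma commutant_anti {S T : Set (H →L[ℂ] H)} (h : S ⊆ T) : commutant T ⊆ commutant S :=
  fun x hx A hA => hx A (h hA)

lemma isClosed_commutant (S : Set (H →L[ℂ] H)) : IsClosed (commutant S) := by
  have : commutant S = ⋂ A ∈ S, {T : H →L[ℂ] H | A * T = T * A} := by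
    ext T; simp [commutant, Set.mem_iInter]
  rw [this]
  refine isClosed_biInter fun A _ => isClosed_eq ?_ ?_
  · exact continuous_const.mul continuous_id
  · exact continuous_id.mul continuous_const

lemma star_mem_commutant {S : Set (H →L[ℂ] H)} (hS : ∀ A ∈ S, star A ∈ S)
    {T : H →L[ℂ] H} (hT : T ∈ commutant S) : star T ∈ commutant S := by
  intro A hA
  have := congrArg star (hT (star A) (hS A hA))
  simpa [star_mul] using this.symm

/-- Orthogonal projection onto a closed submodule, as an endomorphism. -/
def projK (K : Submodule ℂ H) (hK : IsClosed (K : Set H)) : H →L[ℂ] H :=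
  haveI : CompleteSpace K := hK.completeSpace_coe
  K.subtypeL ∘L K.orthogonalProjectionOnto

variable {K : Submodule ℂ H} (hK : IsClosed (K : Set H))

lemma projK_apply_mem (x : H) : projK K hK x ∈ K := by
  haveI : CompleteSpace K := hK.completeSpace_coe
  exact (K.orthogonalProjectionOnto x).2

lemma projK_apply_of_mem {x : H} (hx : x ∈ K) : projK K hK x = x := by
  haveI : CompleteSpace K := hK.completeSpace_coe
  simp only [projK, comp_apply]
  exact congrArg Subtype.val (Submodule.orthogonalProjectionOnto_mem_subspace_eq_self (⟨x, hx⟩ : K))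

lemma projK_apply_of_mem_orth {x : H} (hx : x ∈ Kᗮ) : projK K hK x = 0 := by
  haveI : CompleteSpace K := hK.completeSpace_coe
  simp only [projK, comp_apply]
  rw [Submodule.orthogonalProjectionOnto_apply_of_mem_orthogonal hx]
  simp

lemma projK_sa : IsSelfAdjoint (projK K hK) := by
  haveI : CompleteSpace K := hK.completeSpace_coe
  exact isSelfAdjoint_starProjection K

lemma projK_idem : projK K hK * projK K hK = projK K hK := by
  ext x
  exact projK_apply_of_mem hK (projK_apply_mem hK x)

lemma sub_projK_mem_orth (x : H) : x - projK K hK x ∈ Kᗮ := by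
  haveI : CompleteSpace K := hK.completeSpace_coe
  exact K.sub_starProjection_mem_orthogonal x

/-- An operator leaving `K` and (via its adjoint) `Kᗮ` invariant commutes with the
projection onto `K`. -/
lemma commute_projK {S : H →L[ℂ] H} (h1 : ∀ x ∈ K, S x ∈ K)
    (h2 : ∀ x ∈ K, ContinuousLinearMap.adjoint S x ∈ K) :
    S * projK K hK = projK K hK * S := by
  ext x
  have hxK : projK K hK x ∈ K := projK_apply_mem hK x
  have hxO : x - projK K hK x ∈ Kᗮ := sub_projK_mem_orth hK x
  have hSorth : S (x - projK K hK x) ∈ Kᗮ := by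
    rw [Submodule.mem_orthogonal] at hxO ⊢
    intro u hu
    rw [← ContinuousLinearMap.adjoint_inner_left]
    exact hxO _ (h2 u hu)
  have : S x = S (projK K hK x) + S (x - projK K hK x) := by
    rw [← map_add]; congr 1; abel
  calc (S * projK K hK) x = S (projK K hK x) := rfl
    _ = projK K hK (S (projK K hK x)) + projK K hK (S (x - projK K hK x)) := by
        rw [projK_apply_of_mem hK (h1 _ hxK), projK_apply_of_mem_orth hK hSorth, add_zero]
    _ = projK K hK (S x) := by rw [← map_add, ← this]
    _ = (projK K hK * S) x := rfl

lemma projK_comp_projK {K' : Submodule ℂ H} (hK' : IsClosed (K' : Set H)) (h : K' ≤ K) :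
    projK K hK * projK K' hK' = projK K' hK' := by
  ext x
  exact projK_apply_of_mem hK (h (projK_apply_mem hK' x))

/-- The projection onto the closure of the range of an operator. -/
def rproj (B : H →L[ℂ] H) : H →L[ℂ] H :=
  projK (LinearMap.range (B : H →ₗ[ℂ] H)).topologicalClosure
    (Submodule.isClosed_topologicalClosure _)

lemma rproj_apply_mem (B : H →L[ℂ] H) (x : H) :
    rproj B x ∈ (LinearMap.range (B : H →ₗ[ℂ] H)).topologicalClosure :=
  projK_apply_mem (Submodule.isClosed_topologicalClosure _) x

lemma rproj_apply_of_mem {B : H →L[ℂ] H} {x : H}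
    (hx : x ∈ (LinearMap.range (B : H →ₗ[ℂ] H)).topologicalClosure) : rproj B x = x :=
  projK_apply_of_mem (Submodule.isClosed_topologicalClosure _) hx

lemma rproj_sa (B : H →L[ℂ] H) : IsSelfAdjoint (rproj B) := projK_sa _

lemma rproj_idem (B : H →L[ℂ] H) : rproj B * rproj B = rproj B := projK_idem _

lemma rproj_comp_self (B : H →L[ℂ] H) : rproj B * B = B := by
  ext x
  exact rproj_apply_of_mem (Submodule.le_topologicalClosure _ (LinearMap.mem_range_self (B : H →ₗ[ℂ] H) x))

lemma self_comp_rproj {B : H →L[ℂ] H} (hB : IsSelfAdjoint B) : B * rproj B = B := by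
  have := congrArg star (rproj_comp_self B)
  rwa [star_mul, (rproj_sa B).star_eq, hB.star_eq] at this

lemma comp_rproj_eq_zero {B C : H →L[ℂ] H} (h : C * B = 0) : C * rproj B = 0 := by
  ext x
  have hmem := rproj_apply_mem B x
  have hker : ((LinearMap.range (B : H →ₗ[ℂ] H)).topologicalClosure : Set H) ⊆ {y | C y = 0} := by
    have hcl : IsClosed {y : H | C y = 0} := isClosed_eq C.continuous continuous_const
    have hsub : (LinearMap.range (B : H →ₗ[ℂ] H) : Set H) ⊆ {y | C y = 0} := by
      rintro _ ⟨y, rfl⟩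
      have := congrFun (congrArg DFunLike.coe h) y
      simpa using this
    calc ((LinearMap.range (B : H →ₗ[ℂ] H)).topologicalClosure : Set H)
        = closure (LinearMap.range (B : H →ₗ[ℂ] H) : Set H) := rfl
      _ ⊆ {y | C y = 0} := hcl.closure_subset_iff.mpr hsub
  exact hker hmem

lemma commute_rproj {B S : H →L[ℂ] H} (h1 : S * B = B * S)
    (h2 : ContinuousLinearMap.adjoint S * B = B * ContinuousLinearMap.adjoint S) :
    S * rproj B = rproj B * S := by
  refine commute_projK _ ?_ ?_
  · intro x hx
    have hmaps : Set.MapsTo S (LinearMap.range (B : H →ₗ[ℂ] H) : Set H)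
        ((LinearMap.range (B : H →ₗ[ℂ] H)).topologicalClosure : Set H) := by
      rintro _ ⟨y, rfl⟩
      refine Submodule.le_topologicalClosure _ ?_
      have := congrFun (congrArg DFunLike.coe h1) y
      simp only [ContinuousLinearMap.mul_apply] at this
      exact this ▸ LinearMap.mem_range_self (B : H →ₗ[ℂ] H) (S y)
    have := (hmaps.closure S.continuous) hx
    rwa [IsClosed.closure_eq (Submodule.isClosed_topologicalClosure _)] at this
  · intro x hx
    have hmaps : Set.MapsTo (ContinuousLinearMap.adjoint S) (LinearMap.range (B : H →ₗ[ℂ] H) : Set H)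
        ((LinearMap.range (B : H →ₗ[ℂ] H)).topologicalClosure : Set H) := by
      rintro _ ⟨y, rfl⟩
      refine Submodule.le_topologicalClosure _ ?_
      have := congrFun (congrArg DFunLike.coe h2) y
      simp only [ContinuousLinearMap.mul_apply] at this
      exact this ▸ LinearMap.mem_range_self (B : H →ₗ[ℂ] H) _
    have := (hmaps.closure (ContinuousLinearMap.adjoint S).continuous) hx
    rwa [IsClosed.closure_eq (Submodule.isClosed_topologicalClosure _)] at this

lemma rproj_eq_one {B : H →L[ℂ] H} (h : Function.Surjective B) : rproj B = 1 := by
  ext x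
  have hx : x ∈ (LinearMap.range (B : H →ₗ[ℂ] H)).topologicalClosure := by
    refine Submodule.le_topologicalClosure _ ?_
    obtain ⟨y, hy⟩ := h x
    exact ⟨y, hy⟩
  simpa using rproj_apply_of_mem hx

lemma rproj_eq_zero {B : H →L[ℂ] H} (h : B = 0) : rproj B = 0 := by
  subst h
  ext x
  have hmem := rproj_apply_mem (0 : H →L[ℂ] H) x
  have hbot : (LinearMap.range ((0 : H →L[ℂ] H) : H →ₗ[ℂ] H)).topologicalClosure ≤ ⊥ := by
    refine Submodule.topologicalClosure_minimal _ ?_ ?_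
    · intro y hy
      obtain ⟨z, hz⟩ := hy
      simpa using hz.symm
    · exact isClosed_singleton
  have := hbot hmem
  simpa using this

lemma rproj_comp_rproj {B B' D : H →L[ℂ] H} (h : B' = B * D) :
    rproj B * rproj B' = rproj B' ∧ rproj B' * rproj B = rproj B' := by
  have hle : (LinearMap.range (B' : H →ₗ[ℂ] H)).topologicalClosure ≤
      (LinearMap.range (B : H →ₗ[ℂ] H)).topologicalClosure := by
    refine Submodule.topologicalClosure_minimal _ ?_
      (Submodule.isClosed_topologicalClosure _)
    rintro _ ⟨y, rfl⟩
    refine Submodule.le_topologicalClosure _ ?_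
    subst h
    exact ⟨D y, rfl⟩
  have h1 : rproj B * rproj B' = rproj B' :=
    projK_comp_projK (Submodule.isClosed_topologicalClosure _)
      (Submodule.isClosed_topologicalClosure _) hle
  refine ⟨h1, ?_⟩
  have := congrArg star h1
  rwa [star_mul, (rproj_sa B).star_eq, (rproj_sa B').star_eq] at this

lemma sum_nonneg' {ι : Type*} (s : Finset ι) (f : ι → H →L[ℂ] H)
    (h : ∀ i ∈ s, 0 ≤ f i) : 0 ≤ ∑ i ∈ s, f i := by
  classical
  induction s using Finset.induction with
  | empty => simp
  | insert _ _ hx ih =>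
    rename_i a s'
    rw [Finset.sum_insert hx]
    exact add_nonneg (h a (Finset.mem_insert_self a s'))
      (ih fun i hi => h i (Finset.mem_insert_of_mem hi))

lemma sum_le_sum' {ι : Type*} (s : Finset ι) (f g : ι → H →L[ℂ] H)
    (h : ∀ i ∈ s, f i ≤ g i) : ∑ i ∈ s, f i ≤ ∑ i ∈ s, g i := by
  classical
  induction s using Finset.induction with
  | empty => simp
  | insert _ _ hx ih =>
    rename_i a s'
    rw [Finset.sum_insert hx, Finset.sum_insert hx]
    exact add_le_add (h a (Finset.mem_insert_self a s'))
      (ih fun i hi => h i (Finset.mem_insert_of_mem hi))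

/-- Continuous functions of a self-adjoint element of a closed subalgebra stay in the
subalgebra. -/
lemma cfcHom_mem (R : Set (H →L[ℂ] H))
    (hone : (1 : H →L[ℂ] H) ∈ R)
    (hadd : ∀ A B : H →L[ℂ] H, A ∈ R → B ∈ R → A + B ∈ R)
    (hmul : ∀ A B : H →L[ℂ] H, A ∈ R → B ∈ R → A * B ∈ R)
    (hsmulR : ∀ (r : ℝ) (A : H →L[ℂ] H), A ∈ R → r • A ∈ R)
    (hclosed : IsClosed R)
    {A : H →L[ℂ] H} (hA : A ∈ R) (hsa : IsSelfAdjoint A)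
    (f : C(spectrum ℝ A, ℝ)) : cfcHom hsa f ∈ R := by
  induction f using ContinuousMap.induction_on_of_compact with
  | const r =>
    have h1 : (ContinuousMap.const (spectrum ℝ A) r)
        = algebraMap ℝ C(spectrum ℝ A, ℝ) r := rfl
    rw [h1, AlgHomClass.commutes, Algebra.algebraMap_eq_smul_one]
    exact hsmulR r 1 hone
  | id => rw [cfcHom_id hsa]; exact hA
  | star_id =>
    have : star ((ContinuousMap.id ℝ).restrict (spectrum ℝ A))
        = (ContinuousMap.id ℝ).restrict (spectrum ℝ A) := by
      ext x; simp
    rw [this, cfcHom_id hsa]; exact hA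
  | add f g hf hg => rw [map_add]; exact hadd _ _ hf hg
  | mul f g hf hg => rw [map_mul]; exact hmul _ _ hf hg
  | frequently f hf =>
    have h1 : f ∈ closure {g : C(spectrum ℝ A, ℝ) | cfcHom hsa g ∈ R} :=
      mem_closure_iff_frequently.mpr hf
    have h2 : cfcHom hsa f ∈ closure R := by
      have hcont : Continuous (cfcHom hsa (R := ℝ)) :=
        (cfcHom_isClosedEmbedding hsa).continuous
      have := (image_closure_subset_closure_image hcont)
        (Set.mem_image_of_mem _ h1)
      refine closure_mono ?_ this
      rintro _ ⟨g, hg, rfl⟩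
      exact hg
    rwa [hclosed.closure_eq] at h2

lemma cfc_mem (R : Set (H →L[ℂ] H))
    (hone : (1 : H →L[ℂ] H) ∈ R)
    (hadd : ∀ A B : H →L[ℂ] H, A ∈ R → B ∈ R → A + B ∈ R)
    (hmul : ∀ A B : H →L[ℂ] H, A ∈ R → B ∈ R → A * B ∈ R)
    (hsmulR : ∀ (r : ℝ) (A : H →L[ℂ] H), A ∈ R → r • A ∈ R)
    (hclosed : IsClosed R)
    {A : H →L[ℂ] H} (hA : A ∈ R) (hsa : IsSelfAdjoint A)
    {f : ℝ → ℝ} (hf : ContinuousOn f (spectrum ℝ A)) : cfc f A ∈ R := by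
  rw [cfc_apply f A hsa hf]
  exact cfcHom_mem R hone hadd hmul hsmulR hclosed hA hsa _

end VNAux

set_option maxHeartbeats 2000000 in
set_option synthInstance.maxHeartbeats 400000 in
/-- On a complex Hilbert space, a von Neumann algebra `R` (a unital star-subalgebra of
the continuous linear operators equal to its own double commutant) is generated by its
orthogonal projections: the double commutant of the set of projections in `R` is `R`. -/
theorem vonNeumann_generated_by_projections
    (R : Set (H →L[ℂ] H))
    (hone : (1 : H →L[ℂ] H) ∈ R)
    (hadd : ∀ A B : H →L[ℂ] H, A ∈ R → B ∈ R → A + B ∈ R)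
    (hmul : ∀ A B : H →L[ℂ] H, A ∈ R → B ∈ R → A * B ∈ R)
    (hsmul : ∀ (c : ℂ) (A : H →L[ℂ] H), A ∈ R → c • A ∈ R)
    (hstar : ∀ A : H →L[ℂ] H, A ∈ R → ContinuousLinearMap.adjoint A ∈ R)
    (hdc : commutant (commutant R) = R) :
    commutant (commutant
      {p : H →L[ℂ] H | p ∈ R ∧ p * p = p ∧ ContinuousLinearMap.adjoint p = p}) = R := by
  open VNAux in
  rcases subsingleton_or_nontrivial H with hH | hH
  · haveI : Subsingleton (H →L[ℂ] H) := inferInstance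
    apply Set.eq_of_subset_of_subset
    · intro T _
      exact (Subsingleton.elim T 1) ▸ hone
    · intro A _ S _
      exact Subsingleton.elim _ _
  · set P : Set (H →L[ℂ] H) :=
      {p : H →L[ℂ] H | p ∈ R ∧ p * p = p ∧ ContinuousLinearMap.adjoint p = p} with hPdef
    have hPR : P ⊆ R := fun p hp => hp.1
    have hstar' : ∀ A ∈ R, star A ∈ R := by
      intro A hA
      rw [ContinuousLinearMap.star_eq_adjoint]
      exact hstar A hA
    have hsmulR : ∀ (r : ℝ) (A : H →L[ℂ] H), A ∈ R → r • A ∈ R := by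
      intro r A hA
      have := hsmul ((algebraMap ℝ ℂ) r) A hA
      rwa [algebraMap_smul] at this
    have hclosed : IsClosed R := hdc ▸ isClosed_commutant (commutant R)
    -- the key step: `T` in the commutant of the projections of `R` commutes with every
    -- self-adjoint element of `R`.
    have key : ∀ A ∈ R, IsSelfAdjoint A → ∀ T ∈ commutant P, T * A = A * T := by
      intro A hA hsa T hT
      -- it suffices to approximate
      suffices hsuff : ∀ δ : ℝ, 0 < δ → ‖T * A - A * T‖ ≤ (2 * ‖T‖ + 1) * δ by
        have hpos : (0:ℝ) < 2 * ‖T‖ + 1 := by positivity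
        have h0 : ‖T * A - A * T‖ ≤ 0 := by
          refine le_of_forall_pos_le_add ?_
          intro ε hε
          have := hsuff (ε / (2 * ‖T‖ + 1)) (by positivity)
          rw [mul_div_cancel₀ _ (ne_of_gt hpos)] at this
          linarith
        have h2 : ‖T * A - A * T‖ = 0 := le_antisymm h0 (norm_nonneg _)
        rw [norm_eq_zero, sub_eq_zero] at h2
        exact h2
      intro δ hδ
      set M : ℝ := ‖A‖ + 1 with hM
      have hM1 : (1:ℝ) ≤ M := hM ▸ le_add_of_nonneg_left (norm_nonneg A)
      have hM0 : (0:ℝ) < M := lt_of_lt_of_le one_pos hM1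
      set n : ℕ := ⌈2 * M / δ⌉₊ + 1 with hn
      have hn0 : (0:ℝ) < n := by positivity
      set msh : ℝ := 2 * M / n with hmshdef
      have hmsh0 : 0 < msh := by positivity
      have hmshδ : msh ≤ δ := by
        rw [hmshdef, div_le_iff₀ hn0]
        have h1 : (2 * M / δ) ≤ n := by
          calc (2 * M / δ) ≤ (⌈2 * M / δ⌉₊ : ℝ) := Nat.le_ceil _
            _ ≤ n := by exact_mod_cast Nat.le_succ _
        calc 2 * M = δ * (2 * M / δ) := by field_simp
          _ ≤ δ * n := by
              exact mul_le_mul_of_nonneg_left h1 (le_of_lt hδ)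
      set l : ℕ → ℝ := fun i => -M + i * msh with hl
      have hlsucc : ∀ i : ℕ, l (i + 1) = l i + msh := by
        intro i; simp only [hl]; push_cast; ring
      have hspec : ∀ t ∈ spectrum ℝ A, |t| ≤ ‖A‖ := by
        intro t ht
        simpa using spectrum.norm_le_norm_of_mem ht
      -- the basic operators
      set fb : ℝ → ℝ → ℝ := fun lam t => max (t - lam) 0 with hfb
      set gb : ℝ → ℝ → ℝ := fun lam t => max (lam - t) 0 with hgb
      have hfbc : ∀ lam, Continuous (fb lam) := fun lam =>
        (continuous_id.sub continuous_const).max continuous_const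
      have hgbc : ∀ lam, Continuous (gb lam) := fun lam =>
        (continuous_const.sub continuous_id).max continuous_const
      set Bl : ℝ → (H →L[ℂ] H) := fun lam => cfc (fb lam) A with hBl
      set Cl : ℝ → (H →L[ℂ] H) := fun lam => cfc (gb lam) A with hCl
      set e : ℝ → (H →L[ℂ] H) := fun lam => rproj (Bl lam) with he
      have hBsa : ∀ lam, IsSelfAdjoint (Bl lam) := fun lam =>
        cfc_predicate (fb lam) A
      have hBnn : ∀ lam, 0 ≤ Bl lam := fun lam =>
        cfc_nonneg (fun t _ => le_max_right _ _)
      have hCnn : ∀ lam, 0 ≤ Cl lam := fun lam =>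
        cfc_nonneg (fun t _ => le_max_right _ _)
      have hBmem : ∀ lam, Bl lam ∈ R := fun lam =>
        cfc_mem R hone hadd hmul hsmulR hclosed hA hsa (hfbc lam).continuousOn
      have hesa : ∀ lam, IsSelfAdjoint (e lam) := fun lam => rproj_sa _
      have heidem : ∀ lam, e lam * e lam = e lam := fun lam => rproj_idem _
      have hememR : ∀ lam, e lam ∈ R := by
        intro lam
        rw [← hdc]
        intro S hS
        refine commute_rproj ((hS _ (hBmem lam)).symm) ?_
        have h2 := star_mem_commutant hstar' hS
        rw [ContinuousLinearMap.star_eq_adjoint] at h2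
        exact (h2 _ (hBmem lam)).symm
      have heP : ∀ lam, e lam ∈ P := by
        intro lam
        refine ⟨hememR lam, heidem lam, ?_⟩
        rw [← ContinuousLinearMap.star_eq_adjoint]
        exact (hesa lam).star_eq
      have hTe : ∀ lam, T * e lam = e lam * T := fun lam => (hT _ (heP lam)).symm
      have hAB : ∀ lam, A * Bl lam = Bl lam * A := by
        intro lam
        have h1 := cfc_commute_cfc (fun t : ℝ => t) (fb lam) A
        rwa [cfc_id' ℝ A] at h1
      have hAe : ∀ lam, A * e lam = e lam * A := by
        intro lam
        refine commute_rproj (hAB lam) ?_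
        rw [← ContinuousLinearMap.star_eq_adjoint, hsa.star_eq]
        exact hAB lam
      -- key identities
      have hBCeq : ∀ lam, Bl lam - Cl lam = A - lam • 1 := by
        intro lam
        have h1 : (fun t => fb lam t - gb lam t) = fun t : ℝ => t - lam := by
          funext t
          rcases le_total lam t with h | h
          · simp [hfb, hgb, max_eq_left, sub_nonneg.mpr h, sub_nonpos.mpr h]
          · simp [hfb, hgb, max_eq_right, sub_nonneg.mpr h, sub_nonpos.mpr h]
        calc Bl lam - Cl lam = cfc (fun t => fb lam t - gb lam t) A :=
              (cfc_sub _ _ A (hfbc lam).continuousOn (hgbc lam).continuousOn).symm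
          _ = cfc (fun t : ℝ => t - lam) A := by rw [h1]
          _ = cfc (fun t : ℝ => t) A - cfc (fun _ : ℝ => lam) A :=
              cfc_sub (fun t : ℝ => t) (fun _ : ℝ => lam) A
                continuousOn_id continuousOn_const
          _ = A - lam • 1 := by
              rw [cfc_id' ℝ A, cfc_const lam A, Algebra.algebraMap_eq_smul_one]
      have hCB : ∀ lam, Cl lam * Bl lam = 0 := by
        intro lam
        have h1 : (fun t => gb lam t * fb lam t) = fun _ : ℝ => (0:ℝ) := by
          funext t
          rcases le_total lam t with h | h
          · simp [hgb, max_eq_right, sub_nonpos.mpr h]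
          · simp [hfb, max_eq_right, sub_nonpos.mpr h]
        calc Cl lam * Bl lam = cfc (fun t => gb lam t * fb lam t) A :=
              (cfc_mul _ _ A (hgbc lam).continuousOn (hfbc lam).continuousOn).symm
          _ = 0 := by rw [h1]; simp
      have hCe : ∀ lam, Cl lam * e lam = 0 := fun lam => comp_rproj_eq_zero (hCB lam)
      have heB : ∀ lam, e lam * Bl lam = Bl lam := fun lam => rproj_comp_self _
      have hBe : ∀ lam, Bl lam * e lam = Bl lam := fun lam => self_comp_rproj (hBsa lam)
      have key1 : ∀ lam, e lam * (A - lam • 1) * e lam = Bl lam := by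
        intro lam
        calc e lam * (A - lam • 1) * e lam
            = e lam * (Bl lam - Cl lam) * e lam := by rw [hBCeq lam]
          _ = (e lam * Bl lam) * e lam - e lam * (Cl lam * e lam) := by
              rw [mul_sub (e lam) (Bl lam) (Cl lam), sub_mul,
                mul_assoc (e lam) (Cl lam) (e lam)]
          _ = Bl lam := by rw [heB lam, hBe lam, hCe lam, mul_zero, sub_zero]
      have key2 : ∀ lam, (1 - e lam) * (A - lam • 1) * (1 - e lam)
          = -((1 - e lam) * Cl lam * (1 - e lam)) := by
        intro lam
        have h1 : (1 - e lam) * Bl lam = 0 := by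
          rw [sub_mul, one_mul, heB lam, sub_self]
        calc (1 - e lam) * (A - lam • 1) * (1 - e lam)
            = (1 - e lam) * (Bl lam - Cl lam) * (1 - e lam) := by rw [hBCeq lam]
          _ = ((1 - e lam) * Bl lam) * (1 - e lam)
              - (1 - e lam) * Cl lam * (1 - e lam) := by
              rw [mul_sub (1 - e lam) (Bl lam) (Cl lam),
                sub_mul ((1 - e lam) * Bl lam) ((1 - e lam) * Cl lam) (1 - e lam)]
          _ = -((1 - e lam) * Cl lam * (1 - e lam)) := by rw [h1, zero_mul, zero_sub]
      -- endpoints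
      have he0 : e (l 0) = 1 := by
        have hl0 : l 0 = -M := by simp [hl]
        have hpos : ∀ t ∈ spectrum ℝ A, 0 < t - l 0 := by
          intro t ht
          have := hspec t ht
          rw [hl0, hM]
          have : -‖A‖ ≤ t := neg_le_of_abs_le (hspec t ht)
          linarith
        have hinvc : ContinuousOn (fun t : ℝ => (t - l 0)⁻¹) (spectrum ℝ A) :=
          ContinuousOn.inv₀ (continuous_id.sub continuous_const).continuousOn
            (fun t ht => ne_of_gt (hpos t ht))
        have hJ : Bl (l 0) * cfc (fun t : ℝ => (t - l 0)⁻¹) A = 1 := by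
          simp only [hBl]
          rw [← cfc_mul _ _ A (hfbc (l 0)).continuousOn hinvc]
          have : cfc (fun t => fb (l 0) t * (t - l 0)⁻¹) A
              = cfc (fun _ : ℝ => (1:ℝ)) A := by
            apply cfc_congr
            intro t ht
            have h2 := hpos t ht
            simp only [hfb]
            rw [max_eq_left (le_of_lt h2)]
            field_simp
          rw [this, cfc_const 1 A, map_one]
        refine rproj_eq_one ?_
        intro x
        refine ⟨cfc (fun t : ℝ => (t - l 0)⁻¹) A x, ?_⟩
        have := congrFun (congrArg DFunLike.coe hJ) x
        simpa using this
      have hen : e (l n) = 0 := by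
        have hln : l n = M := by
          rw [hl]
          have hnm : (n:ℝ) * (2 * M / n) = 2 * M := by
            rw [mul_div_assoc']; exact mul_div_cancel_left₀ (2 * M) (ne_of_gt hn0)
          show -M + (n:ℝ) * msh = M
          rw [hmshdef, hnm]
          ring
        have hBn : Bl (l n) = 0 := by
          simp only [hBl]
          have : cfc (fb (l n)) A = cfc (fun _ : ℝ => (0:ℝ)) A := by
            apply cfc_congr
            intro t ht
            have h1 : t ≤ ‖A‖ := le_of_abs_le (hspec t ht)
            simp only [hfb]
            rw [max_eq_right]
            rw [hln, hM]; linarith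
          rw [this]; simp
        exact rproj_eq_zero hBn
      -- monotonicity of the projections
      have hchain : ∀ lam mu : ℝ, lam < mu →
          e lam * e mu = e mu ∧ e mu * e lam = e mu := by
        intro lam mu hlm
        set q : ℝ → ℝ := fun t => max (t - mu) 0 / max (t - lam) (mu - lam) with hq
        have hden : ∀ t : ℝ, 0 < max (t - lam) (mu - lam) := fun t =>
          lt_of_lt_of_le (by linarith) (le_max_right _ _)
        have hqc : Continuous q := by
          apply Continuous.div
          · exact (continuous_id.sub continuous_const).max continuous_const
          · exact (continuous_id.sub continuous_const).max continuous_const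
          · exact fun t => ne_of_gt (hden t)
        have hfact : fb mu = fun t => fb lam t * q t := by
          funext t
          rcases le_total t mu with h | h
          · have h1 : fb mu t = 0 := max_eq_right (by linarith)
            rcases le_total t lam with h2 | h2
            · have : fb lam t = 0 := max_eq_right (by linarith)
              simp [h1, this]
            · have hnum : max (t - mu) 0 = 0 := max_eq_right (by linarith)
              simp [h1, hq, hnum]
          · have h2 : lam < t := lt_of_lt_of_le hlm h
            have h1 : fb mu t = t - mu := max_eq_left (by linarith)
            have h3 : fb lam t = t - lam := max_eq_left (by linarith)
            have h4 : max (t - lam) (mu - lam) = t - lam := max_eq_left (by linarith)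
            rw [h1, h3, hq]
            simp only [h4]
            rw [max_eq_left (by linarith)]
            rw [eq_comm, mul_comm, div_mul_eq_mul_div,
              mul_div_assoc, div_self (by linarith : t - lam ≠ 0), mul_one]
        have hfacteq : Bl mu = Bl lam * cfc q A := by
          simp only [hBl]
          rw [← cfc_mul _ _ A (hfbc lam).continuousOn hqc.continuousOn]
          rw [← hfact]
        exact rproj_comp_rproj hfacteq
      -- the grid projections
      set Δ : ℕ → (H →L[ℂ] H) := fun i => e (l i) - e (l (i+1)) with hΔ
      have hlt : ∀ i : ℕ, l i < l (i+1) := fun i => by rw [hlsucc i]; linarith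
      have hE1 : ∀ i : ℕ, e (l i) * e (l (i+1)) = e (l (i+1)) :=
        fun i => (hchain _ _ (hlt i)).1
      have hE2 : ∀ i : ℕ, e (l (i+1)) * e (l i) = e (l (i+1)) :=
        fun i => (hchain _ _ (hlt i)).2
      have hΔe : ∀ i, Δ i * e (l i) = Δ i := by
        intro i
        simp only [hΔ, sub_mul, heidem (l i), hE2 i]
      have heΔ : ∀ i, e (l i) * Δ i = Δ i := by
        intro i
        simp only [hΔ, mul_sub, heidem (l i), hE1 i]
      have hΔe2 : ∀ i, Δ i * e (l (i+1)) = 0 := by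
        intro i
        simp only [hΔ, sub_mul, hE1 i, heidem (l (i+1)), sub_self]
      have he2Δ : ∀ i, e (l (i+1)) * Δ i = 0 := by
        intro i
        simp only [hΔ, mul_sub, hE2 i, heidem (l (i+1)), sub_self]
      have hΔsa : ∀ i, star (Δ i) = Δ i := by
        intro i
        simp only [hΔ, star_sub, (hesa (l i)).star_eq, (hesa (l (i+1))).star_eq]
      have hΔidem : ∀ i, Δ i * Δ i = Δ i := by
        intro i
        have h1 : Δ i * Δ i = Δ i * e (l i) - Δ i * e (l (i+1)) := by
          rw [hΔ]; simp only [mul_sub]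
        rw [h1, hΔe i, hΔe2 i, sub_zero]
      have hΔlow : ∀ i, 0 ≤ Δ i * (A - l i • 1) * Δ i := by
        intro i
        have hcalc : Δ i * (A - l i • 1) * Δ i = star (Δ i) * Bl (l i) * Δ i := by
          calc Δ i * (A - l i • 1) * Δ i
              = (Δ i * e (l i)) * (A - l i • 1) * (e (l i) * Δ i) := by
                rw [hΔe i, heΔ i]
            _ = Δ i * (e (l i) * (A - l i • 1) * e (l i)) * Δ i := by
                simp only [mul_assoc]
            _ = Δ i * Bl (l i) * Δ i := by rw [key1 (l i)]
            _ = star (Δ i) * Bl (l i) * Δ i := by rw [hΔsa i]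
        rw [hcalc]
        exact star_left_conjugate_nonneg (hBnn (l i)) (Δ i)
      have hΔupp : ∀ i, Δ i * (A - l (i+1) • 1) * Δ i ≤ 0 := by
        intro i
        have h1 : Δ i * (1 - e (l (i+1))) = Δ i := by
          rw [mul_sub, mul_one, hΔe2 i, sub_zero]
        have h2 : (1 - e (l (i+1))) * Δ i = Δ i := by
          rw [sub_mul, one_mul, he2Δ i, sub_zero]
        have hcalc : Δ i * (A - l (i+1) • 1) * Δ i
            = -(star (Δ i) * Cl (l (i+1)) * Δ i) := by
          calc Δ i * (A - l (i+1) • 1) * Δ i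
              = (Δ i * (1 - e (l (i+1)))) * (A - l (i+1) • 1)
                  * ((1 - e (l (i+1))) * Δ i) := by rw [h1, h2]
            _ = Δ i * ((1 - e (l (i+1))) * (A - l (i+1) • 1) * (1 - e (l (i+1)))) * Δ i := by
                simp only [mul_assoc]
            _ = Δ i * (-((1 - e (l (i+1))) * Cl (l (i+1)) * (1 - e (l (i+1))))) * Δ i := by
                rw [key2 (l (i+1))]
            _ = -((Δ i * (1 - e (l (i+1)))) * Cl (l (i+1)) * ((1 - e (l (i+1))) * Δ i)) := by
                simp only [mul_neg, neg_mul, mul_assoc]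
            _ = -(star (Δ i) * Cl (l (i+1)) * Δ i) := by rw [h1, h2, hΔsa i]
        rw [hcalc]
        exact neg_nonpos.mpr (star_left_conjugate_nonneg (hCnn (l (i+1))) (Δ i))
      have hterm : ∀ i, Δ i * (A - l i • 1) * Δ i ≤ msh • Δ i := by
        intro i
        have hms : l (i+1) - l i = msh := by rw [hlsucc i]; ring
        have hsplit : A - l i • 1 = (A - l (i+1) • 1) + msh • (1 : H →L[ℂ] H) := by
          rw [← hms, sub_smul]; abel
        have h1 : Δ i * (A - l i • 1) * Δ i
            = Δ i * (A - l (i+1) • 1) * Δ i + msh • Δ i := by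
          rw [hsplit, mul_add (Δ i) (A - l (i+1) • 1) (msh • 1),
            add_mul (Δ i * (A - l (i+1) • 1)) (Δ i * (msh • 1)) (Δ i)]
          congr 1
          rw [mul_smul_comm msh (Δ i) (1 : H →L[ℂ] H), mul_one,
            smul_mul_assoc msh (Δ i) (Δ i), hΔidem i]
        rw [h1]
        have := add_le_add_left (hΔupp i) (msh • Δ i)
        rwa [zero_add] at this
      have hΔA : ∀ i, A * Δ i = Δ i * A := by
        intro i
        simp only [hΔ, mul_sub, sub_mul, hAe (l i), hAe (l (i+1))]
      have hTΔ : ∀ i, T * Δ i = Δ i * T := by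
        intro i
        simp only [hΔ, mul_sub, sub_mul, hTe (l i), hTe (l (i+1))]
      set S : H →L[ℂ] H := ∑ i ∈ Finset.range n, l i • Δ i with hSdef
      have hsumΔ : ∑ i ∈ Finset.range n, Δ i = 1 := by
        have h1 : ∑ i ∈ Finset.range n, Δ i = e (l 0) - e (l n) := by
          simp only [hΔ]
          exact Finset.sum_range_sub' (fun i => e (l i)) n
        rw [h1, he0, hen, sub_zero]
      have hAS : A - S = ∑ i ∈ Finset.range n, Δ i * (A - l i • 1) * Δ i := by
        have hterm2 : ∀ i, Δ i * (A - l i • 1) * Δ i = A * Δ i - l i • Δ i := by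
          intro i
          have h1 : Δ i * (A - l i • 1) * Δ i
              = Δ i * A * Δ i - l i • (Δ i * Δ i) := by
            rw [mul_sub (Δ i) A (l i • 1),
              sub_mul (Δ i * A) (Δ i * (l i • 1)) (Δ i)]
            congr 1
            rw [mul_smul_comm (l i) (Δ i) (1 : H →L[ℂ] H), mul_one,
              smul_mul_assoc (l i) (Δ i) (Δ i)]
          have h2 : Δ i * A * Δ i = A * Δ i := by
            rw [← hΔA i, mul_assoc, hΔidem i]
          rw [h1, h2, hΔidem i]
        calc A - S = A * (∑ i ∈ Finset.range n, Δ i) - S := by rw [hsumΔ, mul_one]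
          _ = ∑ i ∈ Finset.range n, (A * Δ i - l i • Δ i) := by
              rw [Finset.mul_sum, hSdef, Finset.sum_sub_distrib]
          _ = ∑ i ∈ Finset.range n, Δ i * (A - l i • 1) * Δ i := by
              refine Finset.sum_congr rfl fun i _ => ?_
              rw [hterm2 i]
      have h0AS : 0 ≤ A - S := by
        rw [hAS]
        exact sum_nonneg' _ _ (fun i _ => hΔlow i)
      have hASle : A - S ≤ msh • 1 := by
        rw [hAS]
        calc ∑ i ∈ Finset.range n, Δ i * (A - l i • 1) * Δ i
            ≤ ∑ i ∈ Finset.range n, msh • Δ i :=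
              sum_le_sum' _ _ _ (fun i _ => hterm i)
          _ = msh • ∑ i ∈ Finset.range n, Δ i := (Finset.smul_sum).symm
          _ = msh • 1 := by rw [hsumΔ]
      have hnormAS : ‖A - S‖ ≤ δ := by
        calc ‖A - S‖ ≤ ‖msh • (1 : H →L[ℂ] H)‖ :=
              CStarAlgebra.norm_le_norm_of_nonneg_of_le h0AS hASle
          _ = msh := by
              rw [norm_smul, Real.norm_eq_abs, abs_of_pos hmsh0, norm_one, mul_one]
          _ ≤ δ := hmshδ
      have hTS : T * S = S * T := by
        rw [hSdef, Finset.mul_sum, Finset.sum_mul]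
        refine Finset.sum_congr rfl fun i _ => ?_
        rw [mul_smul_comm, hTΔ i, smul_mul_assoc]
      have hkeyeq : T * A - A * T = T * (A - S) - (A - S) * T := by
        rw [mul_sub, sub_mul, hTS]; abel
      calc ‖T * A - A * T‖ = ‖T * (A - S) - (A - S) * T‖ := by rw [hkeyeq]
        _ ≤ ‖T * (A - S)‖ + ‖(A - S) * T‖ := norm_sub_le _ _
        _ ≤ ‖T‖ * ‖A - S‖ + ‖A - S‖ * ‖T‖ :=
            add_le_add (norm_mul_le _ _) (norm_mul_le _ _)
        _ ≤ ‖T‖ * δ + δ * ‖T‖ :=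
            add_le_add (mul_le_mul_of_nonneg_left hnormAS (norm_nonneg T))
              (mul_le_mul_of_nonneg_right hnormAS (norm_nonneg T))
        _ ≤ (2 * ‖T‖ + 1) * δ := by nlinarith [norm_nonneg T, le_of_lt hδ]
    -- conclude
    apply Set.eq_of_subset_of_subset
    · have h2 : commutant (commutant P) ⊆ commutant (commutant R) :=
        commutant_anti (commutant_anti hPR)
      exact hdc ▸ h2
    · intro A hA T hT
      -- decompose `A` into self-adjoint parts
      set X : H →L[ℂ] H := A + ContinuousLinearMap.adjoint A with hX
      set Y : H →L[ℂ] H := Complex.I • (A - ContinuousLinearMap.adjoint A) with hY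
      have hsubR : A - ContinuousLinearMap.adjoint A ∈ R := by
        rw [sub_eq_add_neg, ← neg_one_smul ℂ (ContinuousLinearMap.adjoint A)]
        exact hadd _ _ hA (hsmul _ _ (hstar A hA))
      have hXR : X ∈ R := hadd _ _ hA (hstar A hA)
      have hYR : Y ∈ R := hsmul _ _ hsubR
      have hXsa : IsSelfAdjoint X := by
        rw [IsSelfAdjoint, hX, star_add, ContinuousLinearMap.star_eq_adjoint,
          ContinuousLinearMap.star_eq_adjoint, ContinuousLinearMap.adjoint_adjoint,
          add_comm]
      have hYsa : IsSelfAdjoint Y := by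
        rw [IsSelfAdjoint, hY, star_smul, star_sub, ContinuousLinearMap.star_eq_adjoint,
          ContinuousLinearMap.star_eq_adjoint, ContinuousLinearMap.adjoint_adjoint,
          Complex.star_def, Complex.conj_I, neg_smul, ← smul_neg, neg_sub]
      have hXY : X + (-Complex.I) • Y = (2:ℂ) • A := by
        rw [hY, smul_smul, show (-Complex.I) * Complex.I = 1 by
          rw [neg_mul, Complex.I_mul_I, neg_neg], one_smul, hX, two_smul]
        abel
      have hdecomp : A = ((1:ℂ)/2) • (X + (-Complex.I) • Y) := by
        rw [hXY, smul_smul]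
        norm_num
      have hTX : T * X = X * T := key X hXR hXsa T hT
      have hTY : T * Y = Y * T := key Y hYR hYsa T hT
      rw [hdecomp, mul_smul_comm, smul_mul_assoc]
      congr 1
      rw [mul_add, add_mul, hTX, mul_smul_comm, smul_mul_assoc, hTY]

end
end
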